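/- arXiv:math/0702685 — 2 statements merged into one kernel-verified Lean document; each statement's English description precedes it below -/
import Mathlib

section
/- Fix reals n ≥ 1, ν > 0, η > 0, k ≥ 1, and 0 < p < 1. The function O(T) = (p/(1−p))·(η/(n+η))^{k/2}·((n−1+ν+T)/(n−1+ν+(η/(n+η))·T))^{(n+ν)/2} is strictly monotonically increasing in T on [0, ∞). -/
theorem one_sample_posterior_odds_strictMono
    (n ν η p : ℝ) (k : ℕ)
    (hn : 1 ≤ n) (hν : 0 < ν) (hη : 0 < η) (hk : 1 ≤ k)
    (hp0 : 0 < p) (hp1 : p < 1) :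
    StrictMonoOn
      (fun T : ℝ =>
        (p / (1 - p)) * (η / (n + η)) ^ ((k : ℝ) / 2) *
          ((n - 1 + ν + T) / (n - 1 + ν + (η / (n + η)) * T)) ^ ((n + ν) / 2))
      (Set.Ici (0 : ℝ)) := by
  intro x hx y hy hxy
  simp only [Set.mem_Ici] at hx hy
  have hc0 : 0 < η / (n + η) := by positivity
  have hc1 : η / (n + η) < 1 := by
    rw [div_lt_one (by linarith)]; linarith
  have ha : 0 < n - 1 + ν := by linarith
  have hdx : 0 < n - 1 + ν + (η / (n + η)) * x := by positivity
  have hdy : 0 < n - 1 + ν + (η / (n + η)) * y := by positivity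
  have hgx : 0 < (n - 1 + ν + x) / (n - 1 + ν + (η / (n + η)) * x) := by positivity
  have hglt : (n - 1 + ν + x) / (n - 1 + ν + (η / (n + η)) * x)
      < (n - 1 + ν + y) / (n - 1 + ν + (η / (n + η)) * y) := by
    rw [div_lt_div_iff₀ hdx hdy]
    nlinarith [mul_pos (mul_pos ha (sub_pos.mpr hc1)) (sub_pos.mpr hxy)]
  have he : 0 < (n + ν) / 2 := by linarith
  have hpow := Real.rpow_lt_rpow hgx.le hglt he
  have hC : 0 < (p / (1 - p)) * (η / (n + η)) ^ ((k : ℝ) / 2) := by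
    have : 0 < 1 - p := by linarith
    positivity
  exact mul_lt_mul_of_pos_left hpow hC
end

section
/- Fix reals m, n ≥ 1, ν > 0, η > 0, k ≥ 1, 0 < p < 1. The two-sample posterior odds O(T) = (p/(1−p))·((m⁻¹+n⁻¹)/(m⁻¹+n⁻¹+η⁻¹))^{k/2} · ((m+n−2+ν+T)/(m+n−2+ν+ρT))^{(m+n+ν−1)/2}, where ρ = (m⁻¹+n⁻¹)/(m⁻¹+n⁻¹+η⁻¹) ∈ (0,1), is strictly increasing in T on [0,∞). -/
theorem two_sample_posterior_odds_strictMono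
    (m n ν η p : ℝ) (k : ℕ)
    (hm : 1 ≤ m) (hn : 1 ≤ n) (hν : 0 < ν) (hη : 0 < η) (hk : 1 ≤ k)
    (hp0 : 0 < p) (hp1 : p < 1)
    (ρ : ℝ) (hρ : ρ = (m⁻¹ + n⁻¹) / (m⁻¹ + n⁻¹ + η⁻¹)) :
    StrictMonoOn
      (fun T : ℝ =>
        (p / (1 - p)) * ρ ^ ((k : ℝ) / 2) *
          ((m + n - 2 + ν + T) / (m + n - 2 + ν + ρ * T)) ^ ((m + n + ν - 1) / 2))
      (Set.Ici (0 : ℝ)) := by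
  have hm0 : 0 < m := lt_of_lt_of_le one_pos hm
  have hn0 : 0 < n := lt_of_lt_of_le one_pos hn
  have hs : 0 < m⁻¹ + n⁻¹ := by positivity
  have hη0 : 0 < η⁻¹ := by positivity
  have hρ0 : 0 < ρ := by rw [hρ]; positivity
  have hρ1 : ρ < 1 := by
    rw [hρ, div_lt_one (by linarith)]; linarith
  have hc : 0 < m + n - 2 + ν := by linarith
  have he : 0 < (m + n + ν - 1) / 2 := div_pos (by linarith) two_pos
  have hK : 0 < (p / (1 - p)) * ρ ^ ((k : ℝ) / 2) :=
    mul_pos (div_pos hp0 (by linarith)) (Real.rpow_pos_of_pos hρ0 _)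
  intro a ha b hb hab
  simp only [Set.mem_Ici] at ha hb
  have hda : 0 < m + n - 2 + ν + ρ * a := by nlinarith
  have hdb : 0 < m + n - 2 + ν + ρ * b := by nlinarith
  have hbase : (m + n - 2 + ν + a) / (m + n - 2 + ν + ρ * a)
      < (m + n - 2 + ν + b) / (m + n - 2 + ν + ρ * b) := by
    rw [div_lt_div_iff₀ hda hdb]
    nlinarith [mul_pos (mul_pos hc (sub_pos.2 hab)) (sub_pos.2 hρ1)]
  have hbasepos : 0 < (m + n - 2 + ν + a) / (m + n - 2 + ν + ρ * a) := by
    apply div_pos (by linarith) hda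
  exact mul_lt_mul_of_pos_left
    (Real.rpow_lt_rpow hbasepos.le hbase he) hK
end
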